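/- Let A = (Q_{2^{s_n}})^{i_n}(Q_{2^{s_{n−1}}})^{i_{n−1}}⋯(Q_{2^{s_1}})^{i_1} be an A-polynomial. Suppose that for some k ∈ {0,1,…,n−2} one has i_n = i_{n−1} = … = i_{n−k} = 1 and i_{n−k−1} = 2, and the exponents are consecutive: s_n = s_{n−1}+1 = s_{n−2}+2 = … = s_{n−k−1}+k+1. Then ∫ A dμ = ||Q_{2^{s_n}}||² · ∫ (Q_{2^{s_{n−k−2}}})^{i_{n−k−2}}⋯(Q_{2^{s_1}})^{i_1} dμ (where the remaining product is the constant 1 if n−k−2 = 0). -/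

import Mathlib

open Polynomial MeasureTheory Filter

/-- `r γ s` : the recursively defined scales `r 0 = 1`, `r (s+1) = γ (s+1) * (r s)²`. -/
noncomputable def r (γ : ℕ → ℝ) : ℕ → ℝ
  | 0 => 1
  | s + 1 => γ (s + 1) * (r γ s) ^ 2

/-- `P γ s` : the polynomial `P_{2^s}`, with `P_1 = X - 1` and
`P_{2^{s+1}} = P_{2^s} · (P_{2^s} + r_s)`. -/
noncomputable def P (γ : ℕ → ℝ) : ℕ → Polynomial ℝ
  | 0 => X - 1
  | s + 1 => P γ s * (P γ s + C (r γ s))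

/-- The integral `∫ f dν_s` of a function `f` against the normalized counting measure `ν_s`
on the `2^s` (simple, real) zeros of `P_{2^s} + r_s/2`. -/
noncomputable def nuInt (γ : ℕ → ℝ) (s : ℕ) (f : ℝ → ℝ) : ℝ :=
  (((P γ s + C (r γ s / 2)).roots.map f).sum) / 2 ^ s

/-!
For `0 ≤ b ≤ r s` the polynomial `P γ (s+1) + C b` factors as `(P γ s + C b₁) (P γ s + C b₂)`
with `b₁, b₂ ∈ [0, r s]` and `b₁ + b₂ = r s`. By induction all these polynomials split over `ℝ`,
and root sums of polynomials of degree `< 2^s` over the roots of `P γ s + C b` do not depend on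
`b`. Hence `∫ (P γ s + r s / 2) p dν_t = 0` for `deg p < 2^s` and every `t ≥ s`, so in the limit
`Q (2^s) = P γ s + r s / 2`, and therefore `Q (2^(s+1)) = Q (2^s)² + c s` for constants `c s`.

With this recursion, the square `Q (2^s)²` followed by the run `Q (2^(s+1)) ⋯ Q (2^(s+l+1))`
telescopes to `Q (2^(s+l+1))² + R · Q (2^(s+l+1))` with `deg R + 2^(s+1) ≤ 2^(s+l+1)`. The
remaining factors of the A-polynomial have degree `< 2^(s+1)`, since the `s_j` are distinct;
against them `R · Q (2^(s+l+1))` integrates to zero by orthogonality, and `Q (2^(s+l+1))²`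
integrates to `‖Q (2^(s+l+1))‖²` times their integral.
-/

lemma Polynomial.Monic.add_C_of_natDegree_pos {R : Type*} [Semiring R] {p : R[X]} (hp : p.Monic)
    (hdeg : 0 < p.natDegree) (b : R) : (p + C b).Monic :=
  hp.add_of_left (degree_C_le.trans_lt (natDegree_pos_iff_degree_pos.mp hdeg))

lemma Polynomial.Monic.exists_eq_mul_add_of_natDegree_lt {R : Type*} [CommRing R] [Nontrivial R]
    {g w : R[X]} (hg : g.Monic) (hw : w.natDegree < 2 * g.natDegree) :
    ∃ u v : R[X], u.natDegree < g.natDegree ∧ v.natDegree < g.natDegree ∧ w = u * g + v := by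
  have hg1 : g ≠ 1 := by
    rintro rfl
    rw [natDegree_one] at hw
    omega
  refine ⟨w /ₘ g, w %ₘ g, ?_, natDegree_modByMonic_lt w hg hg1, ?_⟩
  · rw [natDegree_divByMonic w hg]
    omega
  · linear_combination -modByMonic_add_div w g

noncomputable def rootSum (h q : ℝ[X]) : ℝ := (h.roots.map fun x => q.eval x).sum

lemma rootSum_mul {h₁ h₂ : ℝ[X]} (hne : h₁ * h₂ ≠ 0) (q : ℝ[X]) :
    rootSum (h₁ * h₂) q = rootSum h₁ q + rootSum h₂ q := by
  rw [rootSum, roots_mul hne, Multiset.map_add, Multiset.sum_add, rootSum, rootSum]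

/-- On the roots of `g + C β` the polynomial `g` is the constant `-β`. -/
lemma rootSum_add_C_mul_add_C_add (g u v : ℝ[X]) (a β : ℝ) :
    rootSum (g + C β) (u * (g + C a) + v)
      = (a - β) * rootSum (g + C β) u + rootSum (g + C β) v := by
  rw [rootSum, rootSum, rootSum, ← Multiset.sum_map_mul_left, ← Multiset.sum_map_add]
  refine congrArg Multiset.sum (Multiset.map_congr rfl fun x hx => ?_)
  have hgx : g.eval x = -β := by
    have := (isRoot_of_mem_roots hx).eq_zero
    rw [eval_add, eval_C] at this
    linarith
  simp only [eval_add, eval_mul, eval_C, hgx]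
  ring

section PolynomialIntegral

variable {μ : Measure ℝ} (hμint : ∀ p : ℝ[X], Integrable (fun x => p.eval x) μ)
include hμint

lemma integral_eval_add (p q : ℝ[X]) :
    ∫ x, (p + q).eval x ∂μ = ∫ x, p.eval x ∂μ + ∫ x, q.eval x ∂μ := by
  simp only [eval_add]
  exact integral_add (hμint p) (hμint q)

lemma integral_eval_sub (p q : ℝ[X]) :
    ∫ x, (p - q).eval x ∂μ = ∫ x, p.eval x ∂μ - ∫ x, q.eval x ∂μ := by
  simp only [eval_sub]
  exact integral_sub (hμint p) (hμint q)

/-- The difference of two monic orthogonal polynomials of equal degree is orthogonal to itself. -/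
lemma eq_of_monic_of_integral_mul_eq_zero
    (hμpos : ∀ p : ℝ[X], p ≠ 0 → 0 < ∫ x, (p.eval x) ^ 2 ∂μ)
    {p q : ℝ[X]} (hp : p.Monic) (hq : q.Monic) (hdeg : p.natDegree = q.natDegree)
    (hp_orth : ∀ f : ℝ[X], f.natDegree < p.natDegree → ∫ x, (p * f).eval x ∂μ = 0)
    (hq_orth : ∀ f : ℝ[X], f.natDegree < q.natDegree → ∫ x, (q * f).eval x ∂μ = 0) :
    p = q := by
  by_contra hne
  have hD : p - q ≠ 0 := sub_ne_zero.mpr hne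
  have hlt : (p - q).natDegree < p.natDegree := natDegree_lt_natDegree hD <|
    degree_sub_lt_left
      (by rw [degree_eq_natDegree hp.ne_zero, degree_eq_natDegree hq.ne_zero, hdeg])
      hp.ne_zero (by rw [hp.leadingCoeff, hq.leadingCoeff])
  have hsq : ∫ x, ((p - q).eval x) ^ 2 ∂μ = 0 := by
    simp only [sq, ← eval_mul, sub_mul, integral_eval_sub hμint, hp_orth _ hlt,
      hq_orth _ (hdeg ▸ hlt), sub_zero]
  exact (hμpos _ hD).ne' hsq

end PolynomialIntegral

section CantorPolynomials

variable {γ : ℕ → ℝ}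

lemma r_pos (hγ : ∀ s, 0 < γ (s + 1)) : ∀ s, 0 < r γ s
  | 0 => one_pos
  | s + 1 => mul_pos (hγ s) (pow_pos (r_pos hγ s) 2)

lemma monic_P_and_natDegree_P : ∀ s, (P γ s).Monic ∧ (P γ s).natDegree = 2 ^ s
  | 0 => by
    rw [P, ← C_1]
    exact ⟨monic_X_sub_C 1, natDegree_X_sub_C 1⟩
  | s + 1 => by
    obtain ⟨hmonic, hdeg⟩ := monic_P_and_natDegree_P s
    have hmonic' := hmonic.add_C_of_natDegree_pos (by rw [hdeg]; positivity) (r γ s)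
    rw [P, hmonic.natDegree_mul hmonic', natDegree_add_C, hdeg, pow_succ, mul_two]
    exact ⟨hmonic.mul hmonic', rfl⟩

lemma monic_P_add_C (s : ℕ) (b : ℝ) : (P γ s + C b).Monic :=
  (monic_P_and_natDegree_P s).1.add_C_of_natDegree_pos
    (by rw [(monic_P_and_natDegree_P s).2]; positivity) b

lemma natDegree_P_add_C (s : ℕ) (b : ℝ) : (P γ s + C b).natDegree = 2 ^ s := by
  rw [natDegree_add_C, (monic_P_and_natDegree_P s).2]

lemma P_succ_add_C_half (s : ℕ) :
    P γ (s + 1) + C (r γ (s + 1) / 2)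
      = (P γ s + C (r γ s / 2)) ^ 2 + C (r γ (s + 1) / 2 - r γ s ^ 2 / 4) := by
  have hr : C (r γ s) = 2 * C (r γ s / 2) := by rw [two_mul, ← C_add, add_halves]
  have hr2 : C (r γ s / 2) ^ 2 = C (r γ s ^ 2 / 4) := by rw [← C_pow]; ring_nf
  rw [P, C_sub]
  linear_combination P γ s * hr - hr2


section CantorSetRoots

variable (hγ : ∀ s, 0 < γ (s + 1) ∧ γ (s + 1) < 1 / 4)
include hγ

/-- Since `r (s+1) ≤ (r s)² / 4`, the quadratic `y (y + r s) + b` has two roots in `[-r s, 0]`. -/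
lemma exists_P_succ_add_C_eq_mul (s : ℕ) {b : ℝ} (hb : b ∈ Set.Icc 0 (r γ (s + 1))) :
    ∃ b₁ ∈ Set.Icc 0 (r γ s), ∃ b₂ ∈ Set.Icc 0 (r γ s), b₁ + b₂ = r γ s ∧
      P γ (s + 1) + C b = (P γ s + C b₁) * (P γ s + C b₂) := by
  obtain ⟨hb0, hb1⟩ := hb
  set ρ := r γ s
  have hρ : 0 < ρ := r_pos (fun t => (hγ t).1) s
  have hdisc : 0 ≤ ρ ^ 2 / 4 - b := by
    have : r γ (s + 1) = γ (s + 1) * ρ ^ 2 := rfl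
    nlinarith [(hγ s).2, sq_nonneg ρ]
  set t := √(ρ ^ 2 / 4 - b)
  have ht0 : 0 ≤ t := Real.sqrt_nonneg _
  have ht2 : t ^ 2 = ρ ^ 2 / 4 - b := Real.sq_sqrt hdisc
  have htle : t ≤ ρ / 2 := by nlinarith
  refine ⟨ρ / 2 - t, ⟨by linarith, by linarith⟩, ρ / 2 + t, ⟨by linarith, by linarith⟩,
    by ring, ?_⟩
  have hsum : C ρ = C (ρ / 2 - t) + C (ρ / 2 + t) := by rw [← C_add]; ring_nf
  have hprod : C (ρ / 2 - t) * C (ρ / 2 + t) = C b := by rw [← C_mul]; congr 1; nlinarith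
  rw [P, hsum, ← hprod]
  ring

lemma rootSum_P_succ_add_C (s : ℕ)
    (hindep : ∀ b ∈ Set.Icc 0 (r γ s), ∀ w : ℝ[X], w.natDegree < 2 ^ s →
      rootSum (P γ s + C b) w = rootSum (P γ s + C (r γ s / 2)) w)
    {b : ℝ} (hb : b ∈ Set.Icc 0 (r γ (s + 1))) {q : ℝ[X]} (hq : q.natDegree < 2 ^ (s + 1)) :
    rootSum (P γ (s + 1) + C b) q = 2 * rootSum (P γ s + C (r γ s / 2)) q := by
  obtain ⟨u, v, hu, hv, rfl⟩ :=
    (monic_P_add_C (γ := γ) s (r γ s / 2)).exists_eq_mul_add_of_natDegree_lt (w := q)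
      (by rwa [natDegree_P_add_C, ← pow_succ'])
  rw [natDegree_P_add_C] at hu hv
  obtain ⟨b₁, hb₁, b₂, hb₂, hsum, hfac⟩ := exists_P_succ_add_C_eq_mul hγ s hb
  rw [hfac, rootSum_mul ((monic_P_add_C s b₁).mul (monic_P_add_C s b₂)).ne_zero]
  simp only [rootSum_add_C_mul_add_C_add, hindep b₁ hb₁ _ hu, hindep b₂ hb₂ _ hu,
    hindep b₁ hb₁ _ hv, hindep b₂ hb₂ _ hv]
  linear_combination -rootSum (P γ s + C (r γ s / 2)) u * hsum

lemma rootSum_P_add_C_eq : ∀ s, ∀ b ∈ Set.Icc 0 (r γ s), ∀ w : ℝ[X], w.natDegree < 2 ^ s →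
    rootSum (P γ s + C b) w = rootSum (P γ s + C (r γ s / 2)) w
  | 0, b, _, w, hw => by
    obtain ⟨c, rfl⟩ := natDegree_eq_zero.mp (by simpa using hw)
    have hX : ∀ b : ℝ, P γ 0 + C b = X - C (1 - b) := fun b => by
      rw [P, C_sub, C_1]; ring
    rw [rootSum, rootSum, hX, hX, roots_X_sub_C, roots_X_sub_C]
    simp
  | s + 1, b, hb, w, hw => by
    have hhalf : r γ (s + 1) / 2 ∈ Set.Icc 0 (r γ (s + 1)) := by
      have := r_pos (fun t => (hγ t).1) (s + 1)
      constructor <;> linarith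
    rw [rootSum_P_succ_add_C hγ s (rootSum_P_add_C_eq s) hb hw,
      rootSum_P_succ_add_C hγ s (rootSum_P_add_C_eq s) hhalf hw]

lemma rootSum_P_succ_add_C_half (s : ℕ) {q : ℝ[X]} (hq : q.natDegree < 2 ^ (s + 1)) :
    rootSum (P γ (s + 1) + C (r γ (s + 1) / 2)) q = 2 * rootSum (P γ s + C (r γ s / 2)) q := by
  have hr := r_pos (fun t => (hγ t).1) (s + 1)
  exact rootSum_P_succ_add_C hγ s (rootSum_P_add_C_eq hγ s) ⟨by linarith, by linarith⟩ hq

lemma nuInt_P_add_C_mul_eq_zero (s : ℕ) {p : ℝ[X]} (hp : p.natDegree < 2 ^ s) {t : ℕ}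
    (hst : s ≤ t) : nuInt γ t (fun x => ((P γ s + C (r γ s / 2)) * p).eval x) = 0 := by
  have hdeg : ((P γ s + C (r γ s / 2)) * p).natDegree < 2 ^ (s + 1) := by
    have := natDegree_mul_le (p := P γ s + C (r γ s / 2)) (q := p)
    rw [natDegree_P_add_C, pow_succ] at *
    omega
  suffices rootSum (P γ t + C (r γ t / 2)) ((P γ s + C (r γ s / 2)) * p) = 0 by
    rw [nuInt, ← rootSum, this, zero_div]
  induction t, hst using Nat.le_induction with
  | base =>
    refine Multiset.sum_eq_zero fun y hy => ?_
    obtain ⟨x, hx, rfl⟩ := Multiset.mem_map.mp hy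
    rw [eval_mul, (isRoot_of_mem_roots hx).eq_zero, zero_mul]
  | succ t hst ih =>
    rw [rootSum_P_succ_add_C_half hγ t (hdeg.trans_le (Nat.pow_le_pow_right two_pos (by omega))),
      ih, mul_zero]

lemma integral_P_add_C_mul_eq_zero {μ : Measure ℝ}
    (hμconv : ∀ p : ℝ[X],
      Tendsto (fun s => nuInt γ s (fun x => p.eval x)) atTop (nhds (∫ x, p.eval x ∂μ)))
    (s : ℕ) {p : ℝ[X]} (hp : p.natDegree < 2 ^ s) :
    ∫ x, ((P γ s + C (r γ s / 2)) * p).eval x ∂μ = 0 :=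
  tendsto_nhds_unique (hμconv _) <| tendsto_const_nhds.congr' <|
    (eventually_ge_atTop s).mono fun _ hst => (nuInt_P_add_C_mul_eq_zero hγ s hp hst).symm

lemma Q_two_pow_eq {μ : Measure ℝ}
    (hμint : ∀ p : ℝ[X], Integrable (fun x => p.eval x) μ)
    (hμpos : ∀ p : ℝ[X], p ≠ 0 → 0 < ∫ x, (p.eval x) ^ 2 ∂μ)
    (hμconv : ∀ p : ℝ[X],
      Tendsto (fun s => nuInt γ s (fun x => p.eval x)) atTop (nhds (∫ x, p.eval x ∂μ)))
    {Q : ℕ → ℝ[X]} (hQmonic : ∀ n, (Q n).Monic) (hQdeg : ∀ n, (Q n).natDegree = n)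
    (hQorth : ∀ n : ℕ, ∀ p : ℝ[X], p.degree < (n : WithBot ℕ) →
      ∫ x, (Q n).eval x * p.eval x ∂μ = 0)
    (s : ℕ) : Q (2 ^ s) = P γ s + C (r γ s / 2) := by
  refine eq_of_monic_of_integral_mul_eq_zero hμint hμpos (hQmonic _) (monic_P_add_C s _)
    (by rw [hQdeg, natDegree_P_add_C]) (fun f hf => ?_) (fun f hf => ?_)
  · rw [hQdeg] at hf
    simpa only [eval_mul] using
      hQorth _ f (degree_le_natDegree.trans_lt (by exact_mod_cast hf))
  · rw [natDegree_P_add_C] at hf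
    exact integral_P_add_C_mul_eq_zero hγ hμconv s hf

end CantorSetRoots

end CantorPolynomials

section SquareRecursion

variable {μ : Measure ℝ} {Q : ℕ → ℝ[X]} {c : ℕ → ℝ}
  (hrec : ∀ s, Q (2 ^ (s + 1)) = Q (2 ^ s) ^ 2 + C (c s))

include hrec in
/-- Telescoping step, with `t = s + l + 1`:
`(Q (2^t)² + R Q (2^t)) Q (2^(t+1)) = Q (2^(t+1))² + (R Q (2^t) - c t) Q (2^(t+1))`. -/
lemma exists_sq_mul_prod_Icc_eq (hQdeg : ∀ n, (Q n).natDegree = n) (s : ℕ) :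
    ∀ l : ℕ, ∃ R : ℝ[X], R.natDegree + 2 ^ (s + 1) ≤ 2 ^ (s + l + 1) ∧
      Q (2 ^ s) ^ 2 * ∏ d ∈ Finset.Icc 1 (l + 1), Q (2 ^ (s + d))
        = Q (2 ^ (s + l + 1)) ^ 2 + R * Q (2 ^ (s + l + 1))
  | 0 => ⟨-C (c s), by simp, by
      rw [Finset.Icc_self, Finset.prod_singleton, hrec s]
      ring⟩
  | l + 1 => by
    obtain ⟨R, hRdeg, hR⟩ := exists_sq_mul_prod_Icc_eq hQdeg s l
    simp only [← add_assoc]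
    refine ⟨R * Q (2 ^ (s + l + 1)) - C (c (s + l + 1)), ?_, ?_⟩
    · have := natDegree_mul_le (p := R) (q := Q (2 ^ (s + l + 1)))
      rw [hQdeg] at this
      rw [natDegree_sub_C, pow_succ 2 (s + l + 1)]
      omega
    · rw [Finset.prod_Icc_succ_top (by omega), ← mul_assoc, hR,
        show s + (l + 1 + 1) = s + l + 1 + 1 by ring, hrec (s + l + 1)]
      ring

variable (hμint : ∀ p : ℝ[X], Integrable (fun x => p.eval x) μ)
  (hQorth : ∀ n : ℕ, ∀ p : ℝ[X], p.degree < (n : WithBot ℕ) →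
    ∫ x, (Q n).eval x * p.eval x ∂μ = 0)
include hQorth

lemma integral_Q_mul_eq_zero {N : ℕ} {B : ℝ[X]} (hB : B.natDegree < N) :
    ∫ x, (Q N * B).eval x ∂μ = 0 := by
  simpa only [eval_mul] using hQorth N B (degree_le_natDegree.trans_lt (by exact_mod_cast hB))

include hrec hμint

lemma integral_Q_two_pow_sq_mul {s : ℕ} {B : ℝ[X]} (hB : B.natDegree < 2 ^ (s + 1)) :
    ∫ x, (Q (2 ^ s) ^ 2 * B).eval x ∂μ = -c s * ∫ x, B.eval x ∂μ := by
  rw [eq_sub_of_add_eq (hrec s).symm, sub_mul, integral_eval_sub hμint,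
    integral_Q_mul_eq_zero hQorth hB]
  simp only [eval_mul, eval_C, integral_const_mul, zero_sub, neg_mul]

lemma integral_Q_two_pow_sq_mul_eq_mul [IsProbabilityMeasure μ] {s : ℕ} {B : ℝ[X]}
    (hB : B.natDegree < 2 ^ (s + 1)) :
    ∫ x, (Q (2 ^ s) ^ 2 * B).eval x ∂μ = (∫ x, (Q (2 ^ s) ^ 2).eval x ∂μ) * ∫ x, B.eval x ∂μ := by
  have hsq := integral_Q_two_pow_sq_mul hrec hμint hQorth (B := 1) (s := s)
    (by rw [natDegree_one]; positivity)
  rw [mul_one] at hsq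
  simp only [integral_Q_two_pow_sq_mul hrec hμint hQorth hB, hsq, eval_one, integral_const,
    probReal_univ, smul_eq_mul, mul_one]

lemma integral_mul_sq_mul_prod_Icc [IsProbabilityMeasure μ] (hQdeg : ∀ n, (Q n).natDegree = n)
    {s : ℕ} {B : ℝ[X]} (hB : B.natDegree < 2 ^ (s + 1)) (l : ℕ) :
    ∫ x, (B * (Q (2 ^ s) ^ 2 * ∏ d ∈ Finset.Icc 1 (l + 1), Q (2 ^ (s + d)))).eval x ∂μ
      = (∫ x, (Q (2 ^ (s + l + 1)) ^ 2).eval x ∂μ) * ∫ x, B.eval x ∂μ := by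
  obtain ⟨R, hRdeg, hR⟩ := exists_sq_mul_prod_Icc_eq hrec hQdeg s l
  have hRB : (R * B).natDegree < 2 ^ (s + l + 1) :=
    natDegree_mul_le.trans_lt (by omega)
  have hsq_deg : B.natDegree < 2 ^ (s + l + 1 + 1) :=
    hB.trans_le (Nat.pow_le_pow_right two_pos (by omega))
  rw [hR, mul_add, integral_eval_add hμint, mul_comm B,
    integral_Q_two_pow_sq_mul_eq_mul hrec hμint hQorth hsq_deg,
    show B * (R * Q (2 ^ (s + l + 1))) = Q (2 ^ (s + l + 1)) * (R * B) by ring,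
    integral_Q_mul_eq_zero hQorth hRB, add_zero]

end SquareRecursion

lemma Finset.prod_Icc_one_add_one_add {M : Type*} [CommMonoid M] (f : ℕ → M) (m : ℕ) :
    ∀ l : ℕ, ∏ j ∈ Finset.Icc 1 (m + 1 + l), f j
      = (∏ j ∈ Finset.Icc 1 m, f j) * f (m + 1) * ∏ d ∈ Finset.Icc 1 l, f (m + 1 + d)
  | 0 => by simp [Finset.prod_Icc_succ_top]
  | l + 1 => by
    rw [← add_assoc, Finset.prod_Icc_succ_top (by omega), Finset.prod_Icc_one_add_one_add f m l,
      Finset.prod_Icc_succ_top (by omega), mul_assoc _ _ (f _)]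
    rfl

lemma sum_two_pow_lt_of_strictMono {sf : ℕ → ℕ} :
    ∀ {m : ℕ}, (∀ j, 1 ≤ j → j ≤ m → sf j < sf (j + 1)) →
      ∑ j ∈ Finset.Icc 1 m, 2 ^ sf j < 2 ^ sf (m + 1)
  | 0, _ => by simp
  | m + 1, hmono => by
    have ih := sum_two_pow_lt_of_strictMono (m := m) fun j hj hjm => hmono j hj (by omega)
    have hstep : 2 ^ (sf (m + 1) + 1) ≤ 2 ^ sf (m + 1 + 1) :=
      Nat.pow_le_pow_right two_pos (hmono (m + 1) (by omega) le_rfl)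
    rw [pow_succ] at hstep
    rw [Finset.sum_Icc_succ_top (by omega)]
    omega

lemma natDegree_prod_pow_lt {Q : ℕ → ℝ[X]} (hQdeg : ∀ n, (Q n).natDegree = n) {sf idx : ℕ → ℕ}
    {m : ℕ} (hmono : ∀ j, 1 ≤ j → j ≤ m → sf j < sf (j + 1))
    (hidx : ∀ j ∈ Finset.Icc 1 m, idx j ≤ 2) :
    (∏ j ∈ Finset.Icc 1 m, Q (2 ^ sf j) ^ idx j).natDegree < 2 ^ (sf (m + 1) + 1) :=
  calc (∏ j ∈ Finset.Icc 1 m, Q (2 ^ sf j) ^ idx j).natDegree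
      ≤ ∑ j ∈ Finset.Icc 1 m, 2 * 2 ^ sf j :=
        (natDegree_prod_le _ _).trans <| Finset.sum_le_sum fun j hj =>
          natDegree_pow_le.trans (by rw [hQdeg]; exact Nat.mul_le_mul_right _ (hidx j hj))
    _ < 2 ^ (sf (m + 1) + 1) := by
        rw [← Finset.mul_sum, pow_succ']
        exact Nat.mul_lt_mul_of_pos_left (sum_two_pow_lt_of_strictMono hmono) two_pos

theorem stmt_8_general (γ : ℕ → ℝ) (hγ : ∀ s : ℕ, 0 < γ (s + 1) ∧ γ (s + 1) < 1 / 4)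
    (μ : Measure ℝ) [IsProbabilityMeasure μ]
    (hμint : ∀ p : Polynomial ℝ, Integrable (fun x => p.eval x) μ)
    (hμpos : ∀ p : Polynomial ℝ, p ≠ 0 → 0 < ∫ x, (p.eval x) ^ 2 ∂μ)
    (hμconv : ∀ p : Polynomial ℝ,
      Tendsto (fun s => nuInt γ s (fun x => p.eval x)) atTop (nhds (∫ x, p.eval x ∂μ)))
    (Q : ℕ → Polynomial ℝ) (hQmonic : ∀ n, (Q n).Monic) (hQdeg : ∀ n, (Q n).natDegree = n)
    (hQorth : ∀ n : ℕ, ∀ p : Polynomial ℝ, p.degree < (n : WithBot ℕ) →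
      ∫ x, (Q n).eval x * p.eval x ∂μ = 0)
    (n : ℕ) (sf idx : ℕ → ℕ)
    (hsmono : ∀ k, 1 ≤ k → k < n → sf k < sf (k + 1))
    (hidx : ∀ k, 1 ≤ k → k ≤ n → idx k = 1 ∨ idx k = 2)
    (hn2 : 2 ≤ n) (k : ℕ) (hk : k ≤ n - 2)
    (hones : ∀ t, t ≤ k → idx (n - t) = 1) (htwo : idx (n - k - 1) = 2)
    (hconsec : ∀ t, t ≤ k + 1 → sf (n - t) + t = sf n) :
    ∫ x, ∏ j ∈ Finset.Icc 1 n, ((Q (2 ^ sf j)).eval x) ^ idx j ∂μ =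
      (∫ x, ((Q (2 ^ sf n)).eval x) ^ 2 ∂μ) *
        ∫ x, ∏ j ∈ Finset.Icc 1 (n - k - 2), ((Q (2 ^ sf j)).eval x) ^ idx j ∂μ := by
  have hQ := Q_two_pow_eq hγ hμint hμpos hμconv hQmonic hQdeg hQorth
  have hrec (s : ℕ) : Q (2 ^ (s + 1)) = Q (2 ^ s) ^ 2 + C (r γ (s + 1) / 2 - r γ s ^ 2 / 4) := by
    rw [hQ, hQ, P_succ_add_C_half]
  obtain ⟨m, rfl⟩ : ∃ m, n = m + 1 + (k + 1) := ⟨n - k - 2, by omega⟩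
  have hpivot : idx (m + 1) = 2 := by rwa [show m + 1 + (k + 1) - k - 1 = m + 1 by omega] at htwo
  have htop : sf (m + 1) + (k + 1) = sf (m + 1 + (k + 1)) := by
    simpa using hconsec (k + 1) le_rfl
  have hrun : ∀ d ∈ Finset.Icc 1 (k + 1),
      Q (2 ^ sf (m + 1 + d)) ^ idx (m + 1 + d) = Q (2 ^ (sf (m + 1) + d)) := fun d hd => by
    obtain ⟨hd1, hdk⟩ := Finset.mem_Icc.mp hd
    have hpos : m + 1 + (k + 1) - (k + 1 - d) = m + 1 + d := by omega
    have hidx1 : idx (m + 1 + d) = 1 := hpos ▸ hones (k + 1 - d) (by omega)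
    have hsf : sf (m + 1 + d) = sf (m + 1) + d := by
      have := hconsec (k + 1 - d) (by omega)
      rw [hpos] at this
      omega
    rw [hidx1, hsf, pow_one]
  simp only [← eval_pow, ← eval_prod]
  rw [show m + 1 + (k + 1) - k - 2 = m by omega, Finset.prod_Icc_one_add_one_add, hpivot,
    Finset.prod_congr rfl hrun, mul_assoc, integral_mul_sq_mul_prod_Icc hrec hμint hQorth hQdeg,
    add_assoc, htop]
  exact natDegree_prod_pow_lt hQdeg (fun j hj hjm => hsmono j hj (by omega))
    fun j hj => by
      obtain ⟨hj1, hjm⟩ := Finset.mem_Icc.mp hj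
      have := hidx j hj1 (by omega)
      omega

theorem stmt_8 (γ : ℕ → ℝ) (hγ : ∀ s : ℕ, 0 < γ (s + 1) ∧ γ (s + 1) < 1 / 4)
    (μ : Measure ℝ) [IsProbabilityMeasure μ]
    (hμint : ∀ p : Polynomial ℝ, Integrable (fun x => p.eval x) μ)
    (hμpos : ∀ p : Polynomial ℝ, p ≠ 0 → 0 < ∫ x, (p.eval x) ^ 2 ∂μ)
    (hμconv : ∀ p : Polynomial ℝ,
      Tendsto (fun s => nuInt γ s (fun x => p.eval x)) atTop (nhds (∫ x, p.eval x ∂μ)))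
    (Q : ℕ → Polynomial ℝ) (hQmonic : ∀ n, (Q n).Monic) (hQdeg : ∀ n, (Q n).natDegree = n)
    (hQorth : ∀ n : ℕ, ∀ p : Polynomial ℝ, p.degree < (n : WithBot ℕ) →
      ∫ x, (Q n).eval x * p.eval x ∂μ = 0)
    (n : ℕ) (hn : 1 ≤ n) (sf idx : ℕ → ℕ)
    (hs1 : 0 < sf 1) (hsmono : ∀ k, 1 ≤ k → k < n → sf k < sf (k + 1))
    (hidx : ∀ k, 1 ≤ k → k ≤ n → idx k = 1 ∨ idx k = 2)
    (hn2 : 2 ≤ n) (k : ℕ) (hk : k ≤ n - 2)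
    (hones : ∀ t, t ≤ k → idx (n - t) = 1) (htwo : idx (n - k - 1) = 2)
    (hconsec : ∀ t, t ≤ k + 1 → sf (n - t) + t = sf n) :
    ∫ x, ∏ j ∈ Finset.Icc 1 n, ((Q (2 ^ sf j)).eval x) ^ idx j ∂μ =
      (∫ x, ((Q (2 ^ sf n)).eval x) ^ 2 ∂μ) *
        ∫ x, ∏ j ∈ Finset.Icc 1 (n - k - 2), ((Q (2 ^ sf j)).eval x) ^ idx j ∂μ :=
  stmt_8_general γ hγ μ hμint hμpos hμconv Q hQmonic hQdeg hQorth n sf idx hsmono hidx hn2 k hk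
    hones htwo hconsec
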